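/- (Proposition 13) Let Σ be a finite connected balanced 2-dimensional simplicial complex with β_2(Σ) ≥ 1 such that the space Z_2(Σ) of Z_2 2-cycles admits a 2-complete basis (by Theorem 2 of the paper, this holds whenever Σ embeds into ℝ^{3}). Then 9·f_2(Σ) ≤ 4·(n^2 − 3n), where n is the number of vertices of Σ. -/

import Mathlib

open Finset

/-- A finite simplicial complex on a finite vertex type `V`:
a finite nonempty collection of nonempty finite sets (faces)
closed under taking nonempty subsets. -/
structure SComplex (V : Type) [DecidableEq V] [Fintype V] where
  faces : Finset (Finset V)
  nonempty : faces.Nonempty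
  no_empty : ∀ σ ∈ faces, σ ≠ ∅
  down_closed : ∀ σ ∈ faces, ∀ τ, τ ⊆ σ → τ ≠ ∅ → τ ∈ faces

namespace SComplex

variable {V : Type} [DecidableEq V] [Fintype V]

/-- The set of faces of dimension `i` (i.e. of cardinality `i+1`). -/
def facesDim (K : SComplex V) (i : ℕ) : Finset (Finset V) :=
  K.faces.filter (fun σ => σ.card = i + 1)

/-- `fnum K i` is the face number `f_i`. -/
def fnum (K : SComplex V) (i : ℕ) : ℕ := (K.facesDim i).card

/-- The space of `Z_2` `i`-chains: functions from the `i`-faces to `Z_2`. -/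
abbrev Chains (K : SComplex V) (i : ℕ) : Type := {σ // σ ∈ K.facesDim i} → ZMod 2

/-- The boundary map `∂_i : C_i → C_{i-1}` (and `∂_0 = 0`): the value of `∂ c` on an
`(i-1)`-face `τ` is the sum over `i`-faces `σ ⊇ τ` of `c σ`. -/
def boundary (K : SComplex V) (i : ℕ) : Chains K i →ₗ[ZMod 2] Chains K (i - 1) :=
  if i = 0 then 0 else
  { toFun := fun c τ =>
      ∑ σ : {σ // σ ∈ K.facesDim i}, if (τ : Finset V) ⊆ (σ : Finset V) then c σ else 0
    map_add' := by
      intro c d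
      funext τ
      show (∑ σ : {σ // σ ∈ K.facesDim i}, _) = _
      rw [Pi.add_apply, ← Finset.sum_add_distrib]
      apply Finset.sum_congr rfl
      intro σ _
      by_cases h : (τ : Finset V) ⊆ (σ : Finset V) <;> simp [h]
    map_smul' := by
      intro a c
      funext τ
      show (∑ σ : {σ // σ ∈ K.facesDim i}, _) = _
      rw [RingHom.id_apply, Pi.smul_apply, smul_eq_mul, Finset.mul_sum]
      apply Finset.sum_congr rfl
      intro σ _
      by_cases h : (τ : Finset V) ⊆ (σ : Finset V) <;> simp [h] }

/-- The `i`-th `Z_2` Betti number: `dim ker ∂_i − rank ∂_{i+1}`. -/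
noncomputable def betti (K : SComplex V) (i : ℕ) : ℕ :=
  Module.finrank (ZMod 2) (LinearMap.ker (K.boundary i)) -
    Module.finrank (ZMod 2) (LinearMap.range (K.boundary (i + 1)))

/-- The number of `i`-faces in the support of a chain. -/
def suppCard {K : SComplex V} {i : ℕ} (c : Chains K i) : ℕ :=
  (Finset.univ.filter (fun σ => c σ ≠ 0)).card

/-- The girth: the minimal support size of a nonzero `d`-cycle. -/
noncomputable def girth (K : SComplex V) (d : ℕ) : ℕ :=
  sInf {n | ∃ c : Chains K d, c ∈ LinearMap.ker (K.boundary d) ∧ c ≠ 0 ∧ suppCard c = n}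

/-- `Z_d(K)` admits an `m`-complete basis: a basis of the space of `d`-cycles such that every
`d`-face lies in the support of at most `m` basis elements. -/
def HasCompleteBasis (K : SComplex V) (d m : ℕ) : Prop :=
  ∃ (ι : Type) (_ : Fintype ι) (b : Module.Basis ι (ZMod 2) (LinearMap.ker (K.boundary d))),
    ∀ σ : {σ // σ ∈ K.facesDim d},
      (Finset.univ.filter (fun i : ι => (b i).1 σ ≠ 0)).card ≤ m

/-- `K` is `d`-dimensional: `d` is the maximal dimension of a face. -/
def IsDim (K : SComplex V) (d : ℕ) : Prop :=
  (∀ σ ∈ K.faces, σ.card ≤ d + 1) ∧ ∃ σ ∈ K.faces, σ.card = d + 1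

/-- `K` is pure `d`-dimensional: every face is contained in a `d`-face. -/
def IsPure (K : SComplex V) (d : ℕ) : Prop :=
  ∀ σ ∈ K.faces, ∃ τ ∈ K.faces, σ ⊆ τ ∧ τ.card = d + 1

/-- A `d`-dimensional complex is balanced if its vertices can be colored with `d+1` colors
so that the coloring is injective on every face. -/
def IsBalanced (K : SComplex V) (d : ℕ) : Prop :=
  ∃ coloring : V → Fin (d + 1), ∀ σ ∈ K.faces, Set.InjOn coloring (σ : Set V)

/-- The `d`-skeleton of `K`: all faces of dimension at most `d`. -/
def skeleton (K : SComplex V) (d : ℕ) : SComplex V where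
  faces := K.faces.filter (fun σ => σ.card ≤ d + 1)
  nonempty := by
    obtain ⟨σ, hσ⟩ := K.nonempty
    obtain ⟨v, hv⟩ := Finset.nonempty_iff_ne_empty.mpr (K.no_empty σ hσ)
    refine ⟨{v}, Finset.mem_filter.mpr ⟨K.down_closed σ hσ {v}
      (Finset.singleton_subset_iff.mpr hv) (Finset.singleton_ne_empty v), by simp⟩⟩
  no_empty := by
    intro σ hσ
    exact K.no_empty σ (Finset.mem_filter.mp hσ).1
  down_closed := by
    intro σ hσ τ hτσ hτ
    rw [Finset.mem_filter] at hσ ⊢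
    exact ⟨K.down_closed σ hσ.1 τ hτσ hτ, le_trans (Finset.card_le_card hτσ) hσ.2⟩

end SComplex

open SComplex

/-!
A nonzero `Z_2` 2-cycle of a balanced 2-complex has at least 8 faces: every vertex of its support
lies in at least four of its faces (two through each of two edges at that vertex), and the support
contains two vertices of the same colour, whose stars are disjoint. For a 2-complete basis of
`Z_2`, the supports of the basis elements together with the support of their sum (again a nonzero
cycle) cover every 2-face at most twice, so `8 (dim Z_2 + 1) ≤ 2 f_2`. Since `∂ ∘ ∂ = 0` and `Σ` is
connected, `f_2 - dim Z_2 = rank ∂_2 ≤ f_1 - f_0 + 1`, hence `3 f_2 + 4 f_0 ≤ 4 f_1`; finally the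
1-skeleton is 3-partite, so `3 f_1 ≤ f_0 ^ 2`.
-/

open Module

theorem sum_zmod_two_eq_card_filter_ne_zero {ι : Type*} (s : Finset ι) (f : ι → ZMod 2) :
    ∑ i ∈ s, f i = #(s.filter (f · ≠ 0)) := by
  rw [← sum_boole]
  refine sum_congr rfl fun i _ => ?_
  generalize f i = y
  revert y
  decide

theorem exists_mem_apply_eq_of_injOn {α κ : Type*} [Fintype κ] {χ : α → κ} {σ : Finset α}
    (hσ : σ.card = Fintype.card κ) (hχ : Set.InjOn χ σ) (t : κ) : ∃ x ∈ σ, χ x = t := by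
  classical
  have himage : σ.image χ = univ := eq_univ_of_card _ (by rw [card_image_of_injOn hχ, hσ])
  exact mem_image.mp (himage ▸ mem_univ t)

theorem card_filter_apply_eq_apply_eq_sum_sq {α κ : Type*} [Fintype κ] [DecidableEq κ]
    (s : Finset α) (χ : α → κ) :
    #((s ×ˢ s).filter fun p => χ p.1 = χ p.2) = ∑ t, #(s.filter (χ · = t)) ^ 2 := by
  rw [card_eq_sum_card_fiberwise (f := fun p => χ p.1) (t := univ)
    fun _ _ => mem_coe.mpr (mem_univ _)]
  refine sum_congr rfl fun t _ => ?_
  rw [sq, ← card_product, filter_filter]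
  congr 1
  ext ⟨x, y⟩
  simp only [mem_filter, mem_product]
  constructor
  · rintro ⟨⟨hx, hy⟩, hxy, rfl⟩
    exact ⟨⟨hx, rfl⟩, hy, hxy.symm⟩
  · rintro ⟨⟨hx, rfl⟩, hy, hyx⟩
    exact ⟨⟨hx, hy⟩, hyx.symm, rfl⟩

namespace SComplex

variable {V : Type} [DecidableEq V] [Fintype V] {K : SComplex V}

theorem mem_facesDim {σ : Finset V} {i : ℕ} : σ ∈ K.facesDim i ↔ σ ∈ K.faces ∧ σ.card = i + 1 :=
  mem_filter

theorem boundary_zero (K : SComplex V) : K.boundary 0 = 0 := rfl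

theorem boundary_apply {i : ℕ} (hi : i ≠ 0) (c : Chains K i) (τ : {τ // τ ∈ K.facesDim (i - 1)}) :
    K.boundary i c τ = ∑ σ : {σ // σ ∈ K.facesDim i}, if τ.1 ⊆ σ.1 then c σ else 0 := by
  simp only [boundary, if_neg hi]
  rfl

theorem finrank_chains (K : SComplex V) (i : ℕ) : finrank (ZMod 2) (Chains K i) = K.fnum i := by
  rw [Module.finrank_fintype_fun_eq_card, Fintype.card_coe, fnum]

theorem card_facesDim_filter_between {k : ℕ} {τ σ : Finset V} (hτ : τ.card = k)
    (hσ : σ ∈ K.faces) (hσk : σ.card = k + 2) (hτσ : τ ⊆ σ) :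
    #((K.facesDim k).filter fun e => τ ⊆ e ∧ e ⊆ σ) = 2 := by
  have himage : (K.facesDim k).filter (fun e => τ ⊆ e ∧ e ⊆ σ) = (σ \ τ).image (insert · τ) := by
    ext e
    simp only [mem_filter, mem_facesDim, mem_image, mem_sdiff]
    constructor
    · rintro ⟨⟨-, he⟩, hτe, heσ⟩
      obtain ⟨a, haτ, rfl⟩ := exists_eq_insert_iff.mpr ⟨hτe, by omega⟩
      exact ⟨a, ⟨heσ (mem_insert_self a τ), haτ⟩, rfl⟩
    · rintro ⟨a, ⟨haσ, haτ⟩, rfl⟩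
      have hsub : insert a τ ⊆ σ := insert_subset haσ hτσ
      refine ⟨⟨K.down_closed σ hσ _ hsub (insert_ne_empty a τ), ?_⟩, subset_insert a τ, hsub⟩
      rw [card_insert_of_notMem haτ, hτ]
  have hinj : Set.InjOn (insert · τ) (σ \ τ : Finset V) := by
    intro a ha b hb hab
    have : a ∈ insert b τ := (show insert a τ = insert b τ from hab) ▸ mem_insert_self a τ
    exact (mem_insert.mp this).resolve_right (mem_sdiff.mp ha).2
  rw [himage, card_image_of_injOn hinj, card_sdiff_of_subset hτσ]
  omega

theorem range_boundary_succ_le_ker (K : SComplex V) (i : ℕ) :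
    LinearMap.range (K.boundary (i + 1)) ≤ LinearMap.ker (K.boundary i) := by
  rcases i with _ | k
  · rw [boundary_zero, LinearMap.ker_zero]
    exact le_top
  rintro _ ⟨c, rfl⟩
  rw [LinearMap.mem_ker]
  funext τ
  rw [boundary_apply k.succ_ne_zero, Pi.zero_apply]
  have hinner : ∀ e : {e // e ∈ K.facesDim (k + 1)},
      (if τ.1 ⊆ e.1 then K.boundary (k + 2) c e else 0) =
      ∑ σ : {σ // σ ∈ K.facesDim (k + 2)}, (if τ.1 ⊆ e.1 ∧ e.1 ⊆ σ.1 then 1 else 0) * c σ := by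
    intro e
    rw [boundary_apply (k + 1).succ_ne_zero]
    split_ifs with h <;> simp [h]
  rw [sum_congr rfl fun e _ => hinner e, sum_comm]
  refine sum_eq_zero fun σ _ => ?_
  rw [← sum_mul, sum_coe_sort (K.facesDim (k + 1))
    (fun e => if τ.1 ⊆ e ∧ e ⊆ σ.1 then (1 : ZMod 2) else 0), sum_boole]
  by_cases hτσ : τ.1 ⊆ σ.1
  · obtain ⟨-, hτ⟩ := mem_facesDim.mp τ.2
    obtain ⟨hσ, hσk⟩ := mem_facesDim.mp σ.2
    rw [card_facesDim_filter_between (by omega) hσ hσk hτσ]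
    exact mul_eq_zero_of_left (ZMod.natCast_self 2) _
  · rw [filter_false_of_mem fun e _ h => hτσ (h.1.trans h.2), card_empty, Nat.cast_zero, zero_mul]

theorem finrank_range_add_finrank_ker_boundary (K : SComplex V) (i : ℕ) :
    finrank (ZMod 2) (LinearMap.range (K.boundary i)) +
      finrank (ZMod 2) (LinearMap.ker (K.boundary i)) = K.fnum i :=
  (LinearMap.finrank_range_add_finrank_ker _).trans (K.finrank_chains i)

theorem finrank_range_boundary_succ_add_le (K : SComplex V) (i : ℕ) :
    finrank (ZMod 2) (LinearMap.range (K.boundary (i + 1))) +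
      finrank (ZMod 2) (LinearMap.range (K.boundary i)) ≤ K.fnum i := by
  have hmono : finrank (ZMod 2) (LinearMap.range (K.boundary (i + 1))) ≤
      finrank (ZMod 2) (LinearMap.ker (K.boundary i)) :=
    Submodule.finrank_mono (K.range_boundary_succ_le_ker i)
  have hrank := K.finrank_range_add_finrank_ker_boundary i
  omega

theorem betti_zero (K : SComplex V) :
    K.betti 0 = K.fnum 0 - finrank (ZMod 2) (LinearMap.range (K.boundary 1)) := by
  rw [betti, boundary_zero, LinearMap.ker_zero, finrank_top, finrank_chains]

theorem fnum_two_add_fnum_zero_le (hconn : K.betti 0 = 1) :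
    K.fnum 2 + K.fnum 0 ≤ finrank (ZMod 2) (LinearMap.ker (K.boundary 2)) + K.fnum 1 + 1 := by
  have h0 := K.betti_zero
  have h1 : finrank (ZMod 2) (LinearMap.range (K.boundary 2)) +
      finrank (ZMod 2) (LinearMap.range (K.boundary 1)) ≤ K.fnum 1 :=
    K.finrank_range_boundary_succ_add_le 1
  have h2 := K.finrank_range_add_finrank_ker_boundary 2
  omega

def support {i : ℕ} (c : Chains K i) : Finset {σ // σ ∈ K.facesDim i} :=
  univ.filter (c · ≠ 0)

def supportStar {i : ℕ} (c : Chains K i) (v : V) : Finset {σ // σ ∈ K.facesDim i} :=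
  (support c).filter (v ∈ ·.1)

theorem mem_supportStar {i : ℕ} {c : Chains K i} {v : V} {σ : {σ // σ ∈ K.facesDim i}} :
    σ ∈ supportStar c v ↔ σ ∈ support c ∧ v ∈ σ.1 :=
  mem_filter

theorem boundary_apply_eq_card {i : ℕ} (hi : i ≠ 0) (c : Chains K i)
    (τ : {τ // τ ∈ K.facesDim (i - 1)}) :
    K.boundary i c τ = #((support c).filter (τ.1 ⊆ ·.1)) := by
  rw [boundary_apply hi, ← sum_filter, sum_zmod_two_eq_card_filter_ne_zero, support, filter_comm]

theorem even_card_support_filter_subset {i : ℕ} (hi : i ≠ 0) {c : Chains K i}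
    (hc : K.boundary i c = 0) (τ : {τ // τ ∈ K.facesDim (i - 1)}) :
    Even #((support c).filter (τ.1 ⊆ ·.1)) := by
  rw [← ZMod.natCast_eq_zero_iff_even, ← boundary_apply_eq_card hi, hc, Pi.zero_apply]

theorem one_lt_card_supportStar_inter {c : Chains K 2} (hc : K.boundary 2 c = 0) {v b : V}
    (hvb : v ≠ b) {σ : {σ // σ ∈ K.facesDim 2}} (hσ : σ ∈ supportStar c v ∩ supportStar c b) :
    1 < #(supportStar c v ∩ supportStar c b) := by
  obtain ⟨hv, hb⟩ := mem_inter.mp hσ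
  have hedge : ({v, b} : Finset V) ∈ K.facesDim 1 := by
    refine mem_facesDim.mpr ⟨K.down_closed σ.1 (mem_facesDim.mp σ.2).1 _ ?_ (insert_ne_empty _ _),
      card_pair hvb⟩
    exact insert_subset (mem_supportStar.mp hv).2
      (singleton_subset_iff.mpr (mem_supportStar.mp hb).2)
  have heven := even_card_support_filter_subset two_ne_zero hc ⟨{v, b}, hedge⟩
  have hfilter : (support c).filter (fun σ => ({v, b} : Finset V) ⊆ σ.1) =
      supportStar c v ∩ supportStar c b := by
    ext σ
    simp only [mem_filter, mem_inter, mem_supportStar, insert_subset_iff, singleton_subset_iff]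
    tauto
  rw [hfilter] at heven
  obtain ⟨m, hm⟩ := heven
  have hpos := card_pos.mpr ⟨σ, hσ⟩
  omega

theorem disjoint_supportStar {κ : Type*} {χ : V → κ} (hχ : ∀ σ ∈ K.faces, Set.InjOn χ σ)
    {i : ℕ} (c : Chains K i) {x y : V} (hxy : x ≠ y) (hcol : χ x = χ y) :
    Disjoint (supportStar c x) (supportStar c y) := by
  refine disjoint_left.mpr fun σ hx hy => hxy ?_
  exact hχ σ.1 (mem_facesDim.mp σ.2).1 (mem_supportStar.mp hx).2 (mem_supportStar.mp hy).2 hcol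

section Girth

variable {χ : V → Fin 3} {c : Chains K 2}

/-- The faces of the support through the edge of `σ₀` opposite to `a` at `v` come in pairs, and
the other face of such a pair meets the colour of `a` in a vertex other than `a`. -/
theorem exists_color_eq_mem_supportStar (hχ : ∀ σ ∈ K.faces, Set.InjOn χ σ)
    (hc : K.boundary 2 c = 0) {σ₀ : {σ // σ ∈ K.facesDim 2}} (hσ₀ : σ₀ ∈ support c) {v a : V}
    (hv : v ∈ σ₀.1) (ha : a ∈ σ₀.1) (hva : v ≠ a) :
    ∃ a', a' ≠ a ∧ χ a' = χ a ∧ (supportStar c v ∩ supportStar c a').Nonempty := by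
  have hσ₀3 := (mem_facesDim.mp σ₀.2).2
  obtain ⟨b, hb, hbva⟩ := exists_mem_notMem_of_card_lt_card (s := {v, a}) (t := σ₀.1)
    (by rw [card_pair hva, hσ₀3]; omega)
  simp only [mem_insert, mem_singleton, not_or] at hbva
  obtain ⟨σ₁, hσ₁, hσ₁σ₀⟩ := exists_mem_ne (one_lt_card_supportStar_inter hc (Ne.symm hbva.1)
    (mem_inter.mpr ⟨mem_supportStar.mpr ⟨hσ₀, hv⟩, mem_supportStar.mpr ⟨hσ₀, hb⟩⟩)) σ₀
  simp only [mem_inter, mem_supportStar] at hσ₁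
  obtain ⟨⟨hσ₁c, hvσ₁⟩, -, hbσ₁⟩ := hσ₁
  obtain ⟨hσ₁f, hσ₁3⟩ := mem_facesDim.mp σ₁.2
  obtain ⟨a', ha', hcol⟩ :=
    exists_mem_apply_eq_of_injOn (by rw [hσ₁3, Fintype.card_fin]) (hχ _ hσ₁f) (χ a)
  refine ⟨a', ?_, hcol, σ₁, mem_inter.mpr
    ⟨mem_supportStar.mpr ⟨hσ₁c, hvσ₁⟩, mem_supportStar.mpr ⟨hσ₁c, ha'⟩⟩⟩
  rintro rfl
  have htriple : ({v, a', b} : Finset V).card = 3 :=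
    card_eq_three.mpr ⟨v, a', b, hva, Ne.symm hbva.1, Ne.symm hbva.2, rfl⟩
  have h₀ : {v, a', b} ⊆ σ₀.1 := by simp only [insert_subset_iff, singleton_subset_iff]; tauto
  have h₁ : {v, a', b} ⊆ σ₁.1 := by simp only [insert_subset_iff, singleton_subset_iff]; tauto
  exact hσ₁σ₀ (Subtype.ext ((eq_of_subset_of_card_le h₁ (by omega)).symm.trans
    (eq_of_subset_of_card_le h₀ (by omega))))

theorem four_le_card_supportStar (hχ : ∀ σ ∈ K.faces, Set.InjOn χ σ) (hc : K.boundary 2 c = 0)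
    {σ₀ : {σ // σ ∈ K.facesDim 2}} (hσ₀ : σ₀ ∈ support c) {v : V} (hv : v ∈ σ₀.1) :
    4 ≤ #(supportStar c v) := by
  obtain ⟨hσ₀f, hσ₀3⟩ := mem_facesDim.mp σ₀.2
  obtain ⟨a, ha, hav⟩ := exists_mem_ne (s := σ₀.1) (by omega) v
  obtain ⟨a', ha'a, hcol, σ₁, hσ₁⟩ := exists_color_eq_mem_supportStar hχ hc hσ₀ hv ha hav.symm
  have hva' : v ≠ a' := fun h => hav.symm (hχ _ hσ₀f hv ha (h ▸ hcol))
  have hva := one_lt_card_supportStar_inter hc hav.symm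
    (mem_inter.mpr ⟨mem_supportStar.mpr ⟨hσ₀, hv⟩, mem_supportStar.mpr ⟨hσ₀, ha⟩⟩)
  have hva'' := one_lt_card_supportStar_inter hc hva' hσ₁
  have hdisj : Disjoint (supportStar c v ∩ supportStar c a) (supportStar c v ∩ supportStar c a') :=
    (disjoint_supportStar hχ c ha'a.symm hcol.symm).mono inter_subset_right inter_subset_right
  calc 4 ≤ #((supportStar c v ∩ supportStar c a) ∪ (supportStar c v ∩ supportStar c a')) := by
        rw [card_union_of_disjoint hdisj]
        omega
    _ ≤ #(supportStar c v) := card_le_card (union_subset inter_subset_left inter_subset_left)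

theorem eight_le_suppCard (hχ : ∀ σ ∈ K.faces, Set.InjOn χ σ) (hc : K.boundary 2 c = 0)
    (hne : c ≠ 0) : 8 ≤ suppCard c := by
  obtain ⟨σ₀, hσ₀⟩ : ∃ σ₀, c σ₀ ≠ 0 := Function.ne_iff.mp hne
  replace hσ₀ : σ₀ ∈ support c := mem_filter.mpr ⟨mem_univ _, hσ₀⟩
  obtain ⟨v, hv, a, ha, hva⟩ := one_lt_card.mp (by rw [(mem_facesDim.mp σ₀.2).2]; omega)
  obtain ⟨a', ha'a, hcol, σ₁, hσ₁⟩ := exists_color_eq_mem_supportStar hχ hc hσ₀ hv ha hva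
  obtain ⟨-, hσ₁a'⟩ := mem_inter.mp hσ₁
  have ha4 := four_le_card_supportStar hχ hc hσ₀ ha
  have ha'4 :=
    four_le_card_supportStar hχ hc (mem_supportStar.mp hσ₁a').1 (mem_supportStar.mp hσ₁a').2
  calc 8 ≤ #(supportStar c a ∪ supportStar c a') := by
        rw [card_union_of_disjoint (disjoint_supportStar hχ c ha'a.symm hcol.symm)]
        omega
    _ ≤ suppCard c := card_le_card (union_subset (filter_subset _ _) (filter_subset _ _))

end Girth

theorem mul_finrank_ker_add_one_le {d g : ℕ}
    (hg : ∀ c ∈ LinearMap.ker (K.boundary d), c ≠ 0 → g ≤ suppCard c)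
    (hz : 1 ≤ finrank (ZMod 2) (LinearMap.ker (K.boundary d))) (hcb : K.HasCompleteBasis d 2) :
    g * (finrank (ZMod 2) (LinearMap.ker (K.boundary d)) + 1) ≤ 2 * K.fnum d := by
  obtain ⟨ι, _, b, hb⟩ := hcb
  set cnt : {σ // σ ∈ K.facesDim d} → ℕ := fun σ => #(univ.filter fun i => (b i).1 σ ≠ 0)
  set s : Chains K d := (∑ i, b i).1 with hs
  have hs_apply : ∀ σ, s σ = cnt σ := fun σ => by
    rw [hs, Submodule.coe_sum, Finset.sum_apply, sum_zmod_two_eq_card_filter_ne_zero]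
  have hs_ne : s ≠ 0 := by
    have : Nonempty ι := Fintype.card_pos_iff.mp (by rwa [← finrank_eq_card_basis b])
    intro h0
    have hli := Fintype.linearIndependent_iff.mp b.linearIndependent (fun _ => 1)
      (by simpa using Subtype.ext h0)
    exact one_ne_zero (hli (Classical.arbitrary ι))
  have hbasis : g * Fintype.card ι ≤ ∑ σ, cnt σ :=
    calc g * Fintype.card ι = ∑ _i : ι, g := by rw [sum_const, card_univ, smul_eq_mul, mul_comm]
      _ ≤ ∑ i, suppCard (b i).1 :=
        sum_le_sum fun i _ => hg _ (b i).2 fun h => b.ne_zero i (Subtype.ext h)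
      _ = ∑ σ, cnt σ := by
        simp only [suppCard, cnt, card_filter]
        exact sum_comm
  have hcover : ∀ σ, cnt σ + (if s σ ≠ 0 then 1 else 0) ≤ 2 := fun σ => by
    have hσ : cnt σ ≤ 2 := hb σ
    rw [hs_apply]
    interval_cases cnt σ <;> decide
  calc g * (finrank (ZMod 2) (LinearMap.ker (K.boundary d)) + 1)
      = g * Fintype.card ι + g := by rw [finrank_eq_card_basis b, mul_add_one]
    _ ≤ ∑ σ, cnt σ + suppCard s := add_le_add hbasis (hg s (∑ i, b i).2 hs_ne)
    _ = ∑ σ, (cnt σ + if s σ ≠ 0 then 1 else 0) := by rw [sum_add_distrib, suppCard, card_filter]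
    _ ≤ ∑ _σ : {σ // σ ∈ K.facesDim d}, 2 := sum_le_sum fun σ _ => hcover σ
    _ = 2 * K.fnum d := by rw [sum_const, card_univ, Fintype.card_coe, smul_eq_mul, mul_comm, fnum]

def vertexSet (K : SComplex V) : Finset V := univ.filter fun v => {v} ∈ K.faces

theorem fnum_zero_eq_card_vertexSet (K : SComplex V) : K.fnum 0 = #K.vertexSet := by
  have himage : K.facesDim 0 = K.vertexSet.image singleton := by
    ext σ
    simp only [mem_facesDim, vertexSet, mem_image, mem_filter, mem_univ, true_and, zero_add,
      card_eq_one]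
    constructor
    · rintro ⟨hσ, v, rfl⟩
      exact ⟨v, hσ, rfl⟩
    · rintro ⟨v, hv, rfl⟩
      exact ⟨hv, v, rfl⟩
  rw [fnum, himage, card_image_of_injective _ singleton_injective]

section Coloring

variable {κ : Type*} [DecidableEq κ] {χ : V → κ}

theorem two_mul_fnum_one_le (hχ : ∀ σ ∈ K.faces, Set.InjOn χ σ) :
    2 * K.fnum 1 ≤ #((K.vertexSet ×ˢ K.vertexSet).filter fun p => χ p.1 ≠ χ p.2) := by
  rw [mul_comm, fnum, ← mul_one #(filter _ _)]
  refine card_mul_le_card_mul (fun e p => e = {p.1, p.2}) (fun e he => ?_) (fun p _ => ?_)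
  · obtain ⟨hef, he2⟩ := mem_facesDim.mp he
    obtain ⟨x, y, hxy, rfl⟩ := card_eq_two.mp he2
    have hvert : ∀ z ∈ ({x, y} : Finset V), z ∈ K.vertexSet := fun z hz =>
      mem_filter.mpr ⟨mem_univ z, K.down_closed _ hef _ (singleton_subset_iff.mpr hz)
        (singleton_ne_empty z)⟩
    have hcol : χ x ≠ χ y := fun h => hxy (hχ _ hef (by simp) (by simp) h)
    calc 2 = #{(x, y), (y, x)} := (card_pair fun h => hxy (Prod.ext_iff.mp h).1).symm
      _ ≤ _ := by
        refine card_le_card fun p hp => ?_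
        simp only [mem_insert, mem_singleton] at hp
        rcases hp with rfl | rfl
        · simp [bipartiteAbove, hvert, hcol]
        · simp [bipartiteAbove, hvert, hcol.symm, pair_comm]
  · exact card_le_one.mpr fun e he e' he' => (mem_filter.mp he).2.trans (mem_filter.mp he').2.symm

/-- Edges join vertices of different colours, and by Cauchy–Schwarz at least a `1 / card κ`
fraction of the ordered pairs of vertices are monochromatic. -/
theorem two_mul_card_mul_fnum_one_add_sq_le [Fintype κ]
    (hχ : ∀ σ ∈ K.faces, Set.InjOn χ σ) :
    2 * Fintype.card κ * K.fnum 1 + K.fnum 0 ^ 2 ≤ Fintype.card κ * K.fnum 0 ^ 2 := by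
  set E := #((K.vertexSet ×ˢ K.vertexSet).filter fun p => χ p.1 ≠ χ p.2) with hE
  set Q := ∑ t, #(K.vertexSet.filter (χ · = t)) ^ 2 with hQ
  have hsplit : Q + E = #K.vertexSet ^ 2 := by
    rw [hQ, hE, ← card_filter_apply_eq_apply_eq_sum_sq, sq, ← card_product]
    exact card_filter_add_card_filter_not _
  have hcs : #K.vertexSet ^ 2 ≤ Fintype.card κ * Q := by
    rw [hQ, card_eq_sum_card_fiberwise fun _ _ => mem_coe.mpr (mem_univ (χ _))]
    simpa using
      sq_sum_le_card_mul_sum_sq (s := univ) (f := fun t => #(K.vertexSet.filter (χ · = t)))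
  calc 2 * Fintype.card κ * K.fnum 1 + K.fnum 0 ^ 2
      ≤ Fintype.card κ * E + Fintype.card κ * Q := by
        rw [fnum_zero_eq_card_vertexSet, mul_comm 2, mul_assoc]
        exact add_le_add (Nat.mul_le_mul_left _ (two_mul_fnum_one_le hχ)) hcs
    _ = Fintype.card κ * K.fnum 0 ^ 2 := by
        rw [← mul_add, add_comm, hsplit, fnum_zero_eq_card_vertexSet]

end Coloring

end SComplex

theorem prop13_general {V : Type} [DecidableEq V] [Fintype V]
    (K : SComplex V) (hbal : K.IsBalanced 2) (hconn : K.betti 0 = 1)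
    (hβ : 1 ≤ K.betti 2) (hcb : K.HasCompleteBasis 2 2) :
    (9 : ℤ) * (K.fnum 2 : ℤ) ≤ 4 * ((K.fnum 0 : ℤ) ^ 2 - 3 * (K.fnum 0 : ℤ)) := by
  obtain ⟨χ, hχ⟩ := hbal
  have hz : 1 ≤ finrank (ZMod 2) (LinearMap.ker (K.boundary 2)) := hβ.trans (Nat.sub_le _ _)
  have hcycles := mul_finrank_ker_add_one_le (fun _ hc => eight_le_suppCard hχ hc) hz hcb
  have heuler := fnum_two_add_fnum_zero_le hconn
  have hturan := two_mul_card_mul_fnum_one_add_sq_le hχ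
  rw [Fintype.card_fin] at hturan
  zify at hcycles heuler hturan
  linarith

/-- Proposition 13. -/
theorem prop13 {V : Type} [DecidableEq V] [Fintype V]
    (K : SComplex V) (hdim : K.IsDim 2) (hbal : K.IsBalanced 2) (hconn : K.betti 0 = 1)
    (hβ : 1 ≤ K.betti 2) (hcb : K.HasCompleteBasis 2 2) :
    (9 : ℤ) * (K.fnum 2 : ℤ) ≤ 4 * ((K.fnum 0 : ℤ) ^ 2 - 3 * (K.fnum 0 : ℤ)) :=
  prop13_general K hbal hconn hβ hcb
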